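/- Let M and Y be metric spaces equipped with Borel measures μ and ν, let f : M → Y be continuous, R ≥ 0 and P ≥ 0. Let V : L²(M,μ;ℂ) → L²(Y,ν;ℂ) be a continuous linear map which covers f with propagation R: for every s ∈ L²(μ) and every closed C ⊆ M with s = 0 μ-a.e. outside C, one has Vs = 0 ν-a.e. outside U_R(f(C)). Let T : L²(μ) → L²(μ) be a continuous linear map with propagation P: for every s ∈ L²(μ) and every closed C ⊆ M with s = 0 μ-a.e. outside C, one has Ts = 0 μ-a.e. outside U_P(C). Then for every u ∈ L²(ν) and every closed D ⊆ Y with u = 0 ν-a.e. outside D, one has V T V* u = 0 ν-a.e. outside U_R( f( U_P( f⁻¹( U_R(D) ) ) ) ). -/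

import Mathlib

/-!
`V*` inherits a support condition from `V` by duality: if `u` vanishes outside `D` and `s` is
supported in a closed set `C` with `U_R(f(C))` disjoint from `D`, then `⟪V* u, s⟫ = ⟪u, V s⟫ = 0`,
so `V* u` vanishes on `C`. The closed sets `f⁻¹(Y \ thickening (R + 1/(n+1)) D)` exhaust the
complement of `f⁻¹(U_R(D))`, hence `V* u` vanishes outside `f⁻¹(U_R(D))`. The propagation of `T`
and of `V` then give the claim.
-/

open MeasureTheory Metric Set

namespace Metric

variable {X : Type*} [PseudoMetricSpace X]

theorem disjoint_cthickening_compl_thickening {R δ : ℝ} (hδ : 0 < δ) (hRδ : R < δ) (D : Set X) :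
    Disjoint D (cthickening R (thickening δ D)ᶜ) := by
  refine disjoint_left.2 fun y hyD hy => ?_
  obtain ⟨z, hz, hyz⟩ := mem_thickening_iff.1 (cthickening_subset_thickening' hδ hRδ _ hy)
  exact hz (mem_thickening_iff.2 ⟨y, hyD, by rwa [dist_comm]⟩)

theorem compl_cthickening_eq_iUnion_compl_thickening {R : ℝ} (hR : 0 ≤ R) (D : Set X) :
    (cthickening R D)ᶜ = ⋃ n : ℕ, (thickening (R + 1 / (n + 1)) D)ᶜ := by
  have hseq : ∀ ε, R < ε →
      (range (fun n : ℕ => R + 1 / (n + 1)) ∩ Ioc R ε).Nonempty := by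
    intro ε hε
    obtain ⟨n, hn⟩ := exists_nat_one_div_lt (sub_pos.2 hε)
    exact ⟨_, mem_range_self n, lt_add_of_pos_right R (by positivity), by linarith⟩
  rw [cthickening_eq_iInter_thickening' hR _
    (range_subset_iff.2 fun n => lt_add_of_pos_right R (by positivity)) hseq D]
  simp only [biInter_range, compl_iInter]

end Metric

namespace MeasureTheory.L2

variable {α 𝕜 E : Type*} [MeasurableSpace α] {μ : Measure α} [RCLike 𝕜]
  [NormedAddCommGroup E] [InnerProductSpace 𝕜 E]

theorem inner_eq_zero_of_ae_eq_zero_outside_disjoint {u w : Lp E 2 μ} {A B : Set α}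
    (hAB : Disjoint A B) (hu : ∀ᵐ x ∂μ, x ∉ A → u x = 0) (hw : ∀ᵐ x ∂μ, x ∉ B → w x = 0) :
    inner 𝕜 u w = 0 := by
  rw [inner_def]
  refine integral_eq_zero_of_ae ?_
  filter_upwards [hu, hw] with x hux hwx
  by_cases hx : x ∈ A
  · simp [hwx (hAB.notMem_of_mem_left hx)]
  · simp [hux hx]

theorem ae_eq_zero_on_of_forall_inner_eq_zero {g : Lp E 2 μ} {C : Set α} (hC : MeasurableSet C)
    (h : ∀ s : Lp E 2 μ, (∀ᵐ x ∂μ, x ∉ C → s x = 0) → inner 𝕜 g s = 0) :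
    ∀ᵐ x ∂μ, x ∈ C → g x = 0 := by
  have hmem : MemLp (C.indicator g) 2 μ := (Lp.memLp g).indicator hC
  set s : Lp E 2 μ := hmem.toLp
  have hs : s =ᵐ[μ] C.indicator g := hmem.coeFn_toLp
  have hsupp : ∀ᵐ x ∂μ, x ∉ C → s x = 0 := by
    filter_upwards [hs] with x hx hxC
    rw [hx, indicator_of_notMem hxC]
  have hinner : inner 𝕜 s s = inner 𝕜 g s := by
    rw [inner_def, inner_def]
    refine integral_congr_ae ?_
    filter_upwards [hs] with x hx
    by_cases hxC : x ∈ C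
    · rw [hx, indicator_of_mem hxC]
    · simp [hx, indicator_of_notMem hxC]
  have hs0 : s = 0 := inner_self_eq_zero.1 (hinner.trans (h s hsupp))
  filter_upwards [hs, hs0 ▸ Lp.coeFn_zero E 2 μ] with x hx hx0 hxC
  rw [← indicator_of_mem hxC g, ← hx, hx0, Pi.zero_apply]

end MeasureTheory.L2

open MeasureTheory.L2

theorem ContinuousLinearMap.adjoint_ae_eq_zero_outside_preimage_cthickening
    {M Y 𝕜 E F : Type*} [PseudoMetricSpace M] [MeasurableSpace M] [OpensMeasurableSpace M]
    [PseudoMetricSpace Y] [MeasurableSpace Y] {μ : Measure M} {ν : Measure Y} [RCLike 𝕜]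
    [NormedAddCommGroup E] [InnerProductSpace 𝕜 E] [CompleteSpace E]
    [NormedAddCommGroup F] [InnerProductSpace 𝕜 F] [CompleteSpace F]
    {f : M → Y} (hf : Continuous f) {R : ℝ} (hR : 0 ≤ R) (V : Lp E 2 μ →L[𝕜] Lp F 2 ν)
    (hV : ∀ (s : Lp E 2 μ) (C : Set M), IsClosed C →
      (∀ᵐ p ∂μ, p ∉ C → s p = 0) →
      (∀ᵐ y ∂ν, y ∉ cthickening R (f '' C) → V s y = 0))
    {u : Lp F 2 ν} {D : Set Y} (hu : ∀ᵐ y ∂ν, y ∉ D → u y = 0) :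
    ∀ᵐ p ∂μ, p ∉ f ⁻¹' cthickening R D → adjoint V u p = 0 := by
  have hpiece : ∀ n : ℕ, ∀ᵐ p ∂μ,
      p ∈ f ⁻¹' (thickening (R + 1 / (n + 1)) D)ᶜ → adjoint V u p = 0 := by
    intro n
    have hC : IsClosed (f ⁻¹' (thickening (R + 1 / (n + 1)) D)ᶜ) :=
      isOpen_thickening.isClosed_compl.preimage hf
    refine ae_eq_zero_on_of_forall_inner_eq_zero (𝕜 := 𝕜) hC.measurableSet fun s hs => ?_
    rw [adjoint_inner_left]
    have hε : (0 : ℝ) < 1 / (n + 1) := Nat.one_div_pos_of_nat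
    have hdisj := (disjoint_cthickening_compl_thickening (add_pos_of_nonneg_of_pos hR hε)
      (lt_add_of_pos_right R hε) D).mono_right
      (cthickening_subset_of_subset R (image_preimage_subset f _))
    exact inner_eq_zero_of_ae_eq_zero_outside_disjoint hdisj hu (hV s _ hC hs)
  filter_upwards [ae_all_iff.2 hpiece] with p hp hpD
  rw [← mem_compl_iff, ← preimage_compl, compl_cthickening_eq_iUnion_compl_thickening hR,
    preimage_iUnion, mem_iUnion] at hpD
  obtain ⟨n, hn⟩ := hpD
  exact hp n hn

open MeasureTheory Metric in
theorem stmt14_general {M Y : Type*} [MetricSpace M] [MetricSpace Y]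
    [MeasurableSpace M] [BorelSpace M] [MeasurableSpace Y]
    (μ : Measure M) (ν : Measure Y) (f : M → Y) (hf : Continuous f)
    (R P : ℝ) (hR : 0 ≤ R)
    (V : Lp ℂ 2 μ →L[ℂ] Lp ℂ 2 ν)
    (hV : ∀ (s : Lp ℂ 2 μ) (C : Set M), IsClosed C →
      (∀ᵐ p ∂μ, p ∉ C → s p = 0) →
      (∀ᵐ y ∂ν, y ∉ cthickening R (f '' C) → V s y = 0))
    (T : Lp ℂ 2 μ →L[ℂ] Lp ℂ 2 μ)
    (hT : ∀ (s : Lp ℂ 2 μ) (C : Set M), IsClosed C →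
      (∀ᵐ p ∂μ, p ∉ C → s p = 0) →
      (∀ᵐ p ∂μ, p ∉ cthickening P C → T s p = 0))
    (u : Lp ℂ 2 ν) (D : Set Y)
    (hu : ∀ᵐ y ∂ν, y ∉ D → u y = 0) :
    ∀ᵐ y ∂ν, y ∉ cthickening R (f '' (cthickening P (f ⁻¹' (cthickening R D)))) →
      V (T ((ContinuousLinearMap.adjoint V) u)) y = 0 :=
  hV _ _ isClosed_cthickening <| hT _ _ (isClosed_cthickening.preimage hf) <|
    V.adjoint_ae_eq_zero_outside_preimage_cthickening hf hR hV hu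

open MeasureTheory Metric in
/-- Support bookkeeping for the conjugated operator `V T V*`: if
`V : L²(μ) → L²(ν)` covers `f` with propagation `R` and `T` has propagation
`P`, then `V T V*` maps sections supported in a closed set `D` to sections
supported in `U_R(f(U_P(f⁻¹(U_R(D)))))`. -/
theorem stmt14 {M Y : Type*} [MetricSpace M] [MetricSpace Y]
    [MeasurableSpace M] [BorelSpace M] [MeasurableSpace Y] [BorelSpace Y]
    (μ : Measure M) (ν : Measure Y) (f : M → Y) (hf : Continuous f)
    (R P : ℝ) (hR : 0 ≤ R) (hP : 0 ≤ P)
    (V : Lp ℂ 2 μ →L[ℂ] Lp ℂ 2 ν)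
    (hV : ∀ (s : Lp ℂ 2 μ) (C : Set M), IsClosed C →
      (∀ᵐ p ∂μ, p ∉ C → s p = 0) →
      (∀ᵐ y ∂ν, y ∉ cthickening R (f '' C) → V s y = 0))
    (T : Lp ℂ 2 μ →L[ℂ] Lp ℂ 2 μ)
    (hT : ∀ (s : Lp ℂ 2 μ) (C : Set M), IsClosed C →
      (∀ᵐ p ∂μ, p ∉ C → s p = 0) →
      (∀ᵐ p ∂μ, p ∉ cthickening P C → T s p = 0))
    (u : Lp ℂ 2 ν) (D : Set Y) (hD : IsClosed D)
    (hu : ∀ᵐ y ∂ν, y ∉ D → u y = 0) :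
    ∀ᵐ y ∂ν, y ∉ cthickening R (f '' (cthickening P (f ⁻¹' (cthickening R D)))) →
      V (T ((ContinuousLinearMap.adjoint V) u)) y = 0 :=
  stmt14_general μ ν f hf R P hR V hV T hT u D hu
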